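/- The KL divergence of the multi-triangle density g_{L,ω,h} from the uniform density on [0,1] satisfies KL(P_{g_{L,ω,h}} ‖ Uniform) ≤ (L²/3) ‖ω‖₁ h³ (2 - 3 ‖ω‖₁ h), provided g_{L,ω,h} is a valid density (h ≤ 1/(2(m+1)) and ‖ω‖₁ L h² ≤ 1). -/

import Mathlib

/-!
From `log x ≤ x - 1` we get `x log x ≤ x² - x` for `x ≥ 0`, so the KL integral is at most
`∫₀¹ (g² - g)`. Write `g = (1 - a) + S` with `a = ‖ω‖₁ L h²` and `S` the sum of the active
bumps. The bumps sit inside `[0, 1]` and have pairwise disjoint supports, so `S²` is the sum of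
the squared bumps, `∫ S = ‖ω‖₁ L h²` and `∫ S² = (2/3) ‖ω‖₁ L² h³`; expanding
`(1 - a + S)² - (1 - a + S)` gives exactly `(L²/3) ‖ω‖₁ h³ (2 - 3 ‖ω‖₁ h)`.
-/

open MeasureTheory Set

noncomputable def triK (L h t : ℝ) : ℝ := max (L * (h - |t|)) 0

def wOne {m : ℕ} (ω : Fin m → Bool) : ℕ := (Finset.univ.filter fun i => ω i = true).card

noncomputable def gMulti (L h : ℝ) (m : ℕ) (ω : Fin m → Bool) (t : ℝ) : ℝ :=
  1 - (wOne ω : ℝ) * L * h ^ 2 +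
    ∑ i : Fin m, (if ω i then (1 : ℝ) else 0) * triK L h (t - ((i : ℕ) + 1) / ((m : ℕ) + 1))

lemma Real.mul_log_le_sq_sub {x : ℝ} (hx : 0 ≤ x) : x * Real.log x ≤ x ^ 2 - x := by
  obtain rfl | hx := hx.eq_or_lt
  · simp
  · nlinarith [Real.log_le_sub_one_of_pos hx]

lemma Finset.sq_sum_of_pairwise_mul_eq_zero {ι R : Type*} [CommSemiring R] {s : Finset ι}
    {f : ι → R} (hf : ∀ i ∈ s, ∀ j ∈ s, i ≠ j → f i * f j = 0) :
    (∑ i ∈ s, f i) ^ 2 = ∑ i ∈ s, f i ^ 2 := by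
  rw [sq, Finset.sum_mul_sum]
  refine Finset.sum_congr rfl fun i hi => ?_
  rw [Finset.sum_eq_single_of_mem i hi fun j hj hji => hf i hi j hj hji.symm, sq]

lemma integral_const_add_sq_sub {α : Type*} [MeasurableSpace α] {μ : Measure α}
    [IsProbabilityMeasure μ] {S : α → ℝ} (k : ℝ) (hS : Integrable S μ)
    (hS2 : Integrable (fun x => S x ^ 2) μ) :
    ∫ x, (k + S x) ^ 2 - (k + S x) ∂μ
      = k ^ 2 - k + (2 * k - 1) * ∫ x, S x ∂μ + ∫ x, S x ^ 2 ∂μ := by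
  have hexpand : ∀ x, (k + S x) ^ 2 - (k + S x) = (k ^ 2 - k + (2 * k - 1) * S x) + S x ^ 2 :=
    fun x => by ring
  have hlin : Integrable (fun x => k ^ 2 - k + (2 * k - 1) * S x) μ :=
    (integrable_const _).add (hS.const_mul _)
  simp_rw [hexpand]
  rw [integral_add hlin hS2, integral_add (integrable_const _) (hS.const_mul _),
    integral_const_mul, integral_const, probReal_univ, one_smul]

section TriangleKernel

variable {L h : ℝ}

lemma triK_nonneg (L h t : ℝ) : 0 ≤ triK L h t := le_max_right _ _

lemma continuous_triK (L h : ℝ) : Continuous (triK L h) := by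
  unfold triK; fun_prop

lemma triK_neg (L h t : ℝ) : triK L h (-t) = triK L h t := by
  simp [triK]

lemma triK_eq_zero (hL : 0 ≤ L) {t : ℝ} (ht : h ≤ |t|) : triK L h t = 0 :=
  max_eq_right (mul_nonpos_of_nonneg_of_nonpos hL (by linarith))

lemma triK_of_mem_Icc (hL : 0 ≤ L) {t : ℝ} (ht : t ∈ Icc 0 h) : triK L h t = L * (h - t) := by
  rw [triK, abs_of_nonneg ht.1]
  exact max_eq_left (mul_nonneg hL (by linarith [ht.2]))

lemma integral_triK_pow (hL : 0 ≤ L) (hh : 0 ≤ h) (n : ℕ) :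
    ∫ u in -h..h, triK L h u ^ n = 2 * L ^ n * h ^ (n + 1) / (n + 1) := by
  have hint : ∀ a b : ℝ, IntervalIntegrable (fun u => triK L h u ^ n) volume a b := fun a b =>
    ((continuous_triK L h).pow n).intervalIntegrable a b
  have hhalf : ∫ u in (0)..h, triK L h u ^ n = L ^ n * (h ^ (n + 1) / (n + 1)) := by
    rw [intervalIntegral.integral_congr (g := fun u => L ^ n * (h - u) ^ n) fun u hu => by
        rw [uIcc_of_le hh] at hu; simp only [triK_of_mem_Icc hL hu, mul_pow],
      intervalIntegral.integral_const_mul,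
      intervalIntegral.integral_comp_sub_left (fun u => u ^ n), integral_pow]
    simp
  have hleft : ∫ u in -h..0, triK L h u ^ n = ∫ u in (0)..h, triK L h u ^ n := by
    simpa [triK_neg] using intervalIntegral.integral_comp_neg (a := -h) (b := 0)
      (fun u => triK L h u ^ n)
  rw [← intervalIntegral.integral_add_adjacent_intervals (hint _ 0) (hint 0 _), hleft, hhalf]
  ring

lemma triK_sub_mul_triK_sub_eq_zero (hL : 0 ≤ L) {a b : ℝ} (hab : 2 * h ≤ |a - b|) (t : ℝ) :
    triK L h (t - a) * triK L h (t - b) = 0 := by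
  have : h ≤ |t - a| ∨ h ≤ |t - b| := by
    by_contra! hlt
    have := abs_sub_le a t b
    rw [abs_sub_comm a t] at this
    linarith [hlt.1, hlt.2]
  rcases this with ha | hb
  · rw [triK_eq_zero hL ha, zero_mul]
  · rw [triK_eq_zero hL hb, mul_zero]

end TriangleKernel

lemma setIntegral_Icc_comp_sub {f : ℝ → ℝ} {c h : ℝ} (hf : ∀ t, h ≤ |t| → f t = 0)
    (hh : 0 ≤ h) (hc₀ : h ≤ c) (hc₁ : c + h ≤ 1) :
    ∫ t in Icc 0 1, f (t - c) = ∫ u in -h..h, f u := by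
  have hf' : ∀ t ∉ Ioc (-h) h, f t = 0 := fun t ht => hf t <| by
    rw [mem_Ioc, not_and_or, not_lt, not_le] at ht
    rcases ht with ht | ht
    · rw [abs_of_nonpos (by linarith)]; linarith
    · rw [abs_of_pos (by linarith)]; linarith
  rw [intervalIntegral.integral_of_le (by linarith),
    setIntegral_eq_integral_of_forall_compl_eq_zero hf',
    setIntegral_eq_integral_of_forall_compl_eq_zero, integral_sub_right_eq_self]
  intro t ht
  apply hf'
  rw [mem_Icc, not_and_or, not_le, not_le] at ht
  rw [mem_Ioc, not_and_or, not_lt, not_le]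
  rcases ht with ht | ht
  · left; linarith
  · right; linarith

lemma integral_sum_triK_sub_pow {ι : Type*} {s : Finset ι} {c : ι → ℝ} {L h : ℝ}
    (hL : 0 ≤ L) (hh : 0 ≤ h) (hc : ∀ i ∈ s, h ≤ c i ∧ c i + h ≤ 1) {n : ℕ} (hn : n ≠ 0) :
    ∫ t in Icc 0 1, ∑ i ∈ s, triK L h (t - c i) ^ n
      = s.card * (2 * L ^ n * h ^ (n + 1) / (n + 1)) := by
  rw [integral_finsetSum (f := fun i t => triK L h (t - c i) ^ n) _ fun i _ =>
    (((continuous_triK L h).comp (continuous_sub_right (c i))).pow n).integrableOn_Icc]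
  rw [Finset.card_eq_sum_ones, Nat.cast_sum, Finset.sum_mul]
  refine Finset.sum_congr rfl fun i hi => ?_
  rw [setIntegral_Icc_comp_sub (f := fun u => triK L h u ^ n)
      (fun t ht => by simp [triK_eq_zero hL ht, hn]) hh (hc i hi).1 (hc i hi).2,
    integral_triK_pow hL hh, Nat.cast_one, one_mul]

noncomputable def gridPoint (m : ℕ) (i : Fin m) : ℝ := ((i : ℕ) + 1) / ((m : ℕ) + 1)

section GridPoint

variable {m : ℕ}

lemma one_div_le_gridPoint (i : Fin m) : 1 / ((m : ℝ) + 1) ≤ gridPoint m i := by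
  unfold gridPoint
  gcongr
  simp

lemma gridPoint_add_one_div_le_one (i : Fin m) : gridPoint m i + 1 / ((m : ℝ) + 1) ≤ 1 := by
  have hi : ((i : ℕ) : ℝ) + 1 ≤ m := by exact_mod_cast i.isLt
  rw [gridPoint, ← add_div, div_le_one (by positivity)]
  linarith

lemma one_div_le_abs_gridPoint_sub {i j : Fin m} (hij : i ≠ j) :
    1 / ((m : ℝ) + 1) ≤ |gridPoint m i - gridPoint m j| := by
  have hne : ((i : ℕ) : ℤ) - (j : ℕ) ≠ 0 := sub_ne_zero.2 (by exact_mod_cast Fin.val_ne_of_ne hij)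
  have hone : (1 : ℝ) ≤ |((i : ℕ) : ℝ) - (j : ℕ)| := by exact_mod_cast Int.one_le_abs hne
  rw [gridPoint, gridPoint, ← sub_div, abs_div, abs_of_pos (by positivity : (0 : ℝ) < m + 1)]
  gcongr
  simpa using hone

end GridPoint

lemma gMulti_eq (L h : ℝ) (m : ℕ) (ω : Fin m → Bool) (t : ℝ) :
    gMulti L h m ω t = 1 - (wOne ω : ℝ) * L * h ^ 2 +
      ∑ i ∈ Finset.univ.filter (fun i => ω i = true), triK L h (t - gridPoint m i) := by
  simp [gMulti, gridPoint, Finset.sum_filter]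

lemma continuous_gMulti (L h : ℝ) (m : ℕ) (ω : Fin m → Bool) : Continuous (gMulti L h m ω) := by
  simp_rw [funext (gMulti_eq L h m ω)]
  exact continuous_const.add <|
    continuous_finsetSum _ fun i _ => (continuous_triK L h).comp (continuous_sub_right _)

lemma gMulti_nonneg {L h : ℝ} {m : ℕ} {ω : Fin m → Bool} (hval : (wOne ω : ℝ) * L * h ^ 2 ≤ 1)
    (t : ℝ) : 0 ≤ gMulti L h m ω t := by
  rw [gMulti_eq]
  exact add_nonneg (by linarith) (Finset.sum_nonneg fun i _ => triK_nonneg _ _ _)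

lemma setIntegral_gMulti_sq_sub {L h : ℝ} {m : ℕ} (ω : Fin m → Bool) (hL : 0 ≤ L) (hh : 0 ≤ h)
    (hh2 : h ≤ 1 / (2 * ((m : ℝ) + 1))) :
    ∫ t in Icc 0 1, gMulti L h m ω t ^ 2 - gMulti L h m ω t
      = (L ^ 2 / 3) * (wOne ω : ℝ) * h ^ 3 * (2 - 3 * (wOne ω : ℝ) * h) := by
  set s := Finset.univ.filter fun i => ω i = true
  set S : ℝ → ℝ := fun t => ∑ i ∈ s, triK L h (t - gridPoint m i)
  have h2h : 2 * h ≤ 1 / ((m : ℝ) + 1) := by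
    rw [le_div_iff₀ (by positivity)] at hh2 ⊢
    linarith
  have hc : ∀ i ∈ s, h ≤ gridPoint m i ∧ gridPoint m i + h ≤ 1 := fun i _ =>
    ⟨by linarith [one_div_le_gridPoint i], by linarith [gridPoint_add_one_div_le_one i]⟩
  have hS_cont : Continuous S :=
    continuous_finsetSum _ fun i _ => (continuous_triK L h).comp (continuous_sub_right _)
  have hS_int : ∫ t in Icc 0 1, S t = s.card * (L * h ^ 2) := by
    have := integral_sum_triK_sub_pow hL hh hc one_ne_zero
    simp only [pow_one] at this
    rw [this]
    ring
  have hS_sq : ∀ t, S t ^ 2 = ∑ i ∈ s, triK L h (t - gridPoint m i) ^ 2 := fun t =>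
    Finset.sq_sum_of_pairwise_mul_eq_zero fun i _ j _ hij =>
      triK_sub_mul_triK_sub_eq_zero hL (h2h.trans (one_div_le_abs_gridPoint_sub hij)) t
  have hS_sq_int : ∫ t in Icc 0 1, S t ^ 2 = s.card * (2 / 3 * L ^ 2 * h ^ 3) := by
    simp_rw [hS_sq]
    rw [integral_sum_triK_sub_pow hL hh hc two_ne_zero]
    ring
  have : IsProbabilityMeasure (volume.restrict (Icc (0 : ℝ) 1)) := ⟨by simp⟩
  simp_rw [gMulti_eq]
  rw [integral_const_add_sq_sub _ hS_cont.integrableOn_Icc (hS_cont.pow 2).integrableOn_Icc,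
    hS_int, hS_sq_int, wOne]
  ring

theorem kl_gMulti_uniform_le_general (m : ℕ) (ω : Fin m → Bool)
    (L h : ℝ) (hL : 0 < L) (hh : 0 < h) (hh2 : h ≤ 1 / (2 * ((m : ℝ) + 1)))
    (hval : (wOne ω : ℝ) * L * h ^ 2 ≤ 1) :
    (∫ t in Set.Icc (0 : ℝ) 1, gMulti L h m ω t * Real.log (gMulti L h m ω t))
      ≤ (L ^ 2 / 3) * (wOne ω : ℝ) * h ^ 3 * (2 - 3 * (wOne ω : ℝ) * h) := by
  have hg := continuous_gMulti L h m ω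
  calc (∫ t in Icc 0 1, gMulti L h m ω t * Real.log (gMulti L h m ω t))
      ≤ ∫ t in Icc 0 1, gMulti L h m ω t ^ 2 - gMulti L h m ω t :=
        setIntegral_mono (Real.continuous_mul_log.comp hg).integrableOn_Icc
          ((hg.pow 2).sub hg).integrableOn_Icc
          fun t => Real.mul_log_le_sq_sub (gMulti_nonneg hval t)
    _ = _ := setIntegral_gMulti_sq_sub ω hL.le hh.le hh2

/-- KL divergence of the multi-triangle distribution from the uniform distribution
on `[0,1]`: `KL(P_{g_ω} ‖ Unif) = ∫₀¹ g_ω ln g_ω ≤ (L²/3) ‖ω‖₁ h³ (2 - 3 ‖ω‖₁ h)`. -/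
theorem kl_gMulti_uniform_le (m : ℕ) (hm : 1 ≤ m) (ω : Fin m → Bool)
    (L h : ℝ) (hL : 0 < L) (hh : 0 < h) (hh2 : h ≤ 1 / (2 * ((m : ℝ) + 1)))
    (hval : (wOne ω : ℝ) * L * h ^ 2 ≤ 1) :
    (∫ t in Set.Icc (0 : ℝ) 1, gMulti L h m ω t * Real.log (gMulti L h m ω t))
      ≤ (L ^ 2 / 3) * (wOne ω : ℝ) * h ^ 3 * (2 - 3 * (wOne ω : ℝ) * h) :=
  kl_gMulti_uniform_le_general m ω L h hL hh hh2 hval
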